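/- arXiv:2412.11956 — 4 statements merged into one kernel-verified Lean document; each statement's English description precedes it below -/
import Mathlib

section
/- For every complex number y with Re y > 0 and every real x > 0, one has e^{-y√x} = (√y/(2√π)) ∫₀^∞ e^{-y(rx + 1/(4r))} r^{-3/2} dr, where √y is the principal branch of the complex square root and the integral is absolutely convergent. -/
/-! Put `r = s²` and `a = √x`: then `r x + 1/(4r) = (a s - 1/(2s))² + a` and
`r^{-3/2} dr = 2 s^{-2} ds`. The Cauchy–Schlömilch substitution `u = a s - b/s` carries
`(a + b/s²) ds` on `(0, ∞)` to `du` on `ℝ`, and the involution `s ↦ b/(a s)`, which negates `u`,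
exchanges the two summands of the weight. Hence for even integrable `h`,
`∫₀^∞ (b/s²) h(a s - b/s) ds = ½ ∫_ℝ h`; for the Gaussian `h(u) = e^{-y(u² + a)}` this gives
`∫₀^∞ e^{-y(rx + 1/(4r))} r^{-3/2} dr = 2 e^{-ya} (π/y)^{1/2}`, and `y^{1/2} (π/y)^{1/2} = √π`.
Absolute convergence comes from that of the Gaussian, transported by the same substitutions. -/

open MeasureTheory Real Set Complex

variable {E : Type*} [NormedAddCommGroup E] [NormedSpace ℝ E]

theorem image_sq_Ioi_zero : (fun s : ℝ => s ^ 2) '' Ioi 0 = Ioi 0 := by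
  refine Subset.antisymm (image_subset_iff.2 fun s (hs : 0 < s) => pow_pos hs 2) fun r hr => ?_
  exact ⟨√r, Real.sqrt_pos.2 hr, Real.sq_sqrt (le_of_lt hr)⟩

theorem hasDerivWithinAt_sq (s : ℝ) (t : Set ℝ) :
    HasDerivWithinAt (fun s : ℝ => s ^ 2) (2 * s) t s := by
  simpa using (hasDerivAt_pow 2 s).hasDerivWithinAt

theorem injOn_sq_Ioi_zero : InjOn (fun s : ℝ => s ^ 2) (Ioi 0) :=
  (pow_left_strictMonoOn₀ two_ne_zero).injOn.mono fun _ hs => le_of_lt hs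

theorem integrableOn_Ioi_comp_sq_iff (g : ℝ → E) :
    IntegrableOn g (Ioi 0) ↔ IntegrableOn (fun s => (2 * s) • g (s ^ 2)) (Ioi 0) := by
  conv_lhs => rw [← image_sq_Ioi_zero, integrableOn_image_iff_integrableOn_abs_deriv_smul
    measurableSet_Ioi (fun s _ => hasDerivWithinAt_sq s _) injOn_sq_Ioi_zero]
  exact integrableOn_congr_fun
    (fun (s : ℝ) (hs : 0 < s) => by rw [abs_of_pos (mul_pos two_pos hs)]) measurableSet_Ioi

theorem integral_Ioi_comp_sq (g : ℝ → E) :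
    ∫ s in Ioi 0, (2 * s) • g (s ^ 2) = ∫ r in Ioi 0, g r := by
  conv_rhs => rw [← image_sq_Ioi_zero, integral_image_eq_integral_abs_deriv_smul
    measurableSet_Ioi (fun s _ => hasDerivWithinAt_sq s _) injOn_sq_Ioi_zero]
  exact setIntegral_congr_fun measurableSet_Ioi fun s hs => by
    rw [abs_of_pos (mul_pos two_pos hs)]

theorem integral_Ioi_comp_div (f : ℝ → E) {c : ℝ} (hc : 0 < c) :
    ∫ s in Ioi 0, (c / s ^ 2) • f (c / s) = ∫ s in Ioi 0, f s := by
  have himage : (fun s => c / s) '' Ioi 0 = Ioi 0 := by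
    refine Subset.antisymm (image_subset_iff.2 fun s hs => div_pos hc hs) fun r hr => ?_
    exact ⟨c / r, div_pos hc hr, div_div_cancel₀ hc.ne'⟩
  have hderiv : ∀ s ∈ Ioi (0 : ℝ),
      HasDerivWithinAt (fun s => c / s) (-(c / s ^ 2)) (Ioi 0) s := fun s hs => by
    simpa [div_eq_mul_inv] using ((hasDerivAt_inv (ne_of_gt hs)).const_mul c).hasDerivWithinAt
  have hinj : InjOn (fun s => c / s) (Ioi 0) := fun _ _ _ _ hst =>
    inv_injective ((mul_right_inj' hc.ne').1 hst)
  conv_rhs => rw [← himage, integral_image_eq_integral_abs_deriv_smul measurableSet_Ioi hderiv hinj]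
  exact setIntegral_congr_fun measurableSet_Ioi fun s hs => by
    rw [abs_neg, abs_of_pos (div_pos hc (pow_pos hs 2))]

section CauchySchlomilch

variable {a b : ℝ}

theorem hasDerivAt_mul_sub_div (a b : ℝ) {s : ℝ} (hs : s ≠ 0) :
    HasDerivAt (fun s => a * s - b / s) (a + b / s ^ 2) s := by
  refine (((hasDerivAt_id s).const_mul a).sub
    ((hasDerivAt_const s b).div (hasDerivAt_id s) hs)).congr_deriv ?_
  simp [neg_div]

theorem strictMonoOn_mul_sub_div (ha : 0 ≤ a) (hb : 0 < b) :
    StrictMonoOn (fun s => a * s - b / s) (Ioi 0) := fun s (hs : 0 < s) t _ hst => by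
  have := mul_le_mul_of_nonneg_left hst.le ha
  have := div_lt_div_of_pos_left hb hs hst
  dsimp only
  linarith

theorem image_mul_sub_div_Ioi (ha : 0 < a) (hb : 0 < b) :
    (fun s => a * s - b / s) '' Ioi 0 = univ := by
  refine eq_univ_of_forall fun z => ?_
  -- the positive root of `a s ^ 2 - z s - b`
  set w := √(z ^ 2 + 4 * a * b)
  have hw : w ^ 2 = z ^ 2 + 4 * a * b := Real.sq_sqrt (by positivity)
  have hzw : 0 < z + w := by
    nlinarith [Real.sqrt_nonneg (z ^ 2 + 4 * a * b), mul_pos ha hb]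
  refine ⟨(z + w) / (2 * a), div_pos hzw (by positivity), ?_⟩
  field_simp
  nlinarith [hw]

theorem integrableOn_Ioi_comp_mul_sub_div_iff (ha : 0 < a) (hb : 0 < b) (h : ℝ → E) :
    Integrable h ↔ IntegrableOn (fun s => (a + b / s ^ 2) • h (a * s - b / s)) (Ioi 0) := by
  rw [← integrableOn_univ, ← image_mul_sub_div_Ioi ha hb,
    integrableOn_image_iff_integrableOn_abs_deriv_smul measurableSet_Ioi
      (fun s hs => (hasDerivAt_mul_sub_div a b (ne_of_gt hs)).hasDerivWithinAt)
      (strictMonoOn_mul_sub_div ha.le hb).injOn]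
  exact integrableOn_congr_fun (fun (s : ℝ) _ => by rw [abs_of_pos (by positivity)])
    measurableSet_Ioi

theorem integral_Ioi_comp_mul_sub_div (ha : 0 < a) (hb : 0 < b) (h : ℝ → E) :
    ∫ s in Ioi 0, (a + b / s ^ 2) • h (a * s - b / s) = ∫ u, h u := by
  conv_rhs => rw [← setIntegral_univ, ← image_mul_sub_div_Ioi ha hb,
    integral_image_eq_integral_abs_deriv_smul measurableSet_Ioi
      (fun s hs => (hasDerivAt_mul_sub_div a b (ne_of_gt hs)).hasDerivWithinAt)
      (strictMonoOn_mul_sub_div ha.le hb).injOn]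
  exact setIntegral_congr_fun measurableSet_Ioi fun s _ => by rw [abs_of_pos (by positivity)]

theorem integrableOn_div_sq_smul_comp_mul_sub_div (ha : 0 < a) (hb : 0 < b) {h : ℝ → E}
    (hh : Integrable h) : IntegrableOn (fun s => (b / s ^ 2) • h (a * s - b / s)) (Ioi 0) := by
  have hratio : IntegrableOn
      (fun s => (b / (a * s ^ 2 + b)) • (a + b / s ^ 2) • h (a * s - b / s)) (Ioi 0) := by
    refine ((integrableOn_Ioi_comp_mul_sub_div_iff ha hb h).1 hh).bdd_smul 1
      (Measurable.aestronglyMeasurable (by fun_prop)) (ae_of_all _ fun s => ?_)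
    rw [Real.norm_of_nonneg (by positivity), div_le_one (by positivity)]
    nlinarith [sq_nonneg s]
  refine hratio.congr_fun (fun s (hs : 0 < s) => ?_) measurableSet_Ioi
  simp only [smul_smul]
  congr 1
  field_simp

theorem integral_div_sq_smul_comp_mul_sub_div_of_even (ha : 0 < a) (hb : 0 < b) {h : ℝ → E}
    (hh : Integrable h) (heven : ∀ u, h (-u) = h u) :
    ∫ s in Ioi 0, (b / s ^ 2) • h (a * s - b / s) = (2 : ℝ)⁻¹ • ∫ u, h u := by
  have hflip : ∀ s, a * (b / (a * s)) - b / (b / (a * s)) = -(a * s - b / s) := fun s => by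
    rcases eq_or_ne s 0 with rfl | hs
    · simp
    field_simp
    ring
  have hinv : ∫ s in Ioi 0, (b / s ^ 2) • h (a * s - b / s)
      = ∫ s in Ioi 0, a • h (a * s - b / s) := by
    rw [← integral_Ioi_comp_div _ (div_pos hb ha)]
    refine setIntegral_congr_fun measurableSet_Ioi fun s (hs : 0 < s) => ?_
    simp only [smul_smul, div_div, hflip, heven]
    congr 1
    field_simp
  have hweight := integrableOn_div_sq_smul_comp_mul_sub_div ha hb hh
  have hconst : IntegrableOn (fun s => a • h (a * s - b / s)) (Ioi 0) := by
    refine (((integrableOn_Ioi_comp_mul_sub_div_iff ha hb h).1 hh).sub hweight).congr_fun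
      (fun s _ => ?_) measurableSet_Ioi
    simp only [Pi.sub_apply, ← sub_smul, add_sub_cancel_right]
  calc ∫ s in Ioi 0, (b / s ^ 2) • h (a * s - b / s)
      = (2 : ℝ)⁻¹ • ∫ s in Ioi 0, (a + b / s ^ 2) • h (a * s - b / s) := by
        simp only [add_smul]
        rw [integral_add hconst hweight, ← hinv, ← two_smul ℝ, smul_smul,
          inv_mul_cancel₀ two_ne_zero, one_smul]
    _ = (2 : ℝ)⁻¹ • ∫ u, h u := by rw [integral_Ioi_comp_mul_sub_div ha hb]

end CauchySchlomilch

theorem integrable_cexp_neg_mul_sq_add {y : ℂ} (hy : 0 < y.re) (c : ℂ) :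
    Integrable fun u : ℝ => cexp (-y * ((u : ℂ) ^ 2 + c)) := by
  simpa only [mul_add, Complex.exp_add, mul_comm] using
    (integrable_cexp_neg_mul_sq hy).const_mul (cexp (-y * c))

theorem integral_cexp_neg_mul_sq_add {y : ℂ} (hy : 0 < y.re) (c : ℂ) :
    ∫ u : ℝ, cexp (-y * ((u : ℂ) ^ 2 + c)) = cexp (-y * c) * (π / y) ^ (1 / 2 : ℂ) := by
  simp only [mul_add, Complex.exp_add, integral_mul_const, integral_gaussian_complex hy]
  ring

theorem cpow_mul_ofReal_div_cpow {y : ℂ} (hy : y ∈ slitPlane) {c : ℝ} (hc : 0 < c) (s : ℂ) :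
    y ^ s * ((c : ℂ) / y) ^ s = (c : ℂ) ^ s := by
  have hy0 := slitPlane_ne_zero hy
  have hc' : (c : ℂ) ≠ 0 := ofReal_ne_zero.2 hc.ne'
  rw [div_eq_mul_inv, cpow_def_of_ne_zero hy0,
    cpow_def_of_ne_zero (mul_ne_zero hc' (inv_ne_zero hy0)), cpow_def_of_ne_zero hc',
    log_ofReal_mul hc (inv_ne_zero hy0), Complex.log_inv _ (slitPlane_arg_ne_pi hy),
    ofReal_log hc.le, ← Complex.exp_add]
  ring_nf

theorem eqOn_subordination_integrand_comp_sq (y : ℂ) {x : ℝ} (hx : 0 < x) :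
    EqOn (fun s : ℝ => (4 : ℝ) • ((2⁻¹ / s ^ 2) •
        cexp (-y * (((√x * s - 2⁻¹ / s : ℝ) : ℂ) ^ 2 + √x))))
      (fun s : ℝ => (2 * s) • (cexp (-y * (((s ^ 2 * x : ℝ) : ℂ) + 1 / (4 * ((s ^ 2 : ℝ) : ℂ)))) *
        (((s ^ 2) ^ (-(3 : ℝ) / 2) : ℝ) : ℂ))) (Ioi 0) := fun s (hs : 0 < s) => by
  have hpow : (s ^ 2) ^ (-(3 : ℝ) / 2) = (s ^ 3)⁻¹ := by
    rw [← Real.rpow_natCast, ← Real.rpow_mul hs.le, ← Real.rpow_natCast, ← Real.rpow_neg hs.le]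
    norm_num
  have hexp : ((s ^ 2 * x : ℝ) : ℂ) + 1 / (4 * ((s ^ 2 : ℝ) : ℂ)) =
      ((√x * s - 2⁻¹ / s : ℝ) : ℂ) ^ 2 + √x := by
    have hs' : (s : ℂ) ≠ 0 := ofReal_ne_zero.2 hs.ne'
    have hx' : ((√x : ℝ) : ℂ) ^ 2 = x := by exact_mod_cast Real.sq_sqrt hx.le
    push_cast
    rw [← hx']
    field_simp
    ring
  simp only [hpow, hexp, real_smul]
  push_cast
  field_simp
  ring

/-- **Complex subordination formula.** For every complex `y` with `Re y > 0` and every real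
`x > 0`, `e^{-y√x} = (√y/(2√π)) ∫₀^∞ e^{-y(rx + 1/(4r))} r^{-3/2} dr`, where `√y = y^{1/2}` is
the principal branch of the complex square root; the integral is absolutely convergent. -/
theorem subordination_formula_complex (y : ℂ) (hy : 0 < y.re) (x : ℝ) (hx : 0 < x) :
    IntegrableOn
      (fun r : ℝ => Complex.exp (-y * ((r * x : ℝ) + 1 / (4 * r))) *
        ((r ^ (-(3 : ℝ) / 2) : ℝ) : ℂ)) (Set.Ioi 0) volume ∧
    Complex.exp (-y * (Real.sqrt x : ℂ)) =
      y ^ (1 / 2 : ℂ) / (2 * (Real.sqrt π : ℂ)) *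
        ∫ r in Set.Ioi (0 : ℝ),
          Complex.exp (-y * ((r * x : ℝ) + 1 / (4 * r))) * ((r ^ (-(3 : ℝ) / 2) : ℝ) : ℂ) := by
  have ha : 0 < √x := Real.sqrt_pos.2 hx
  have hh := integrable_cexp_neg_mul_sq_add hy (√x : ℂ)
  have hsubst := eqOn_subordination_integrand_comp_sq y hx
  refine ⟨(integrableOn_Ioi_comp_sq_iff _).2 <| IntegrableOn.congr_fun
    ((integrableOn_div_sq_smul_comp_mul_sub_div (b := 2⁻¹) ha (by norm_num) hh).smul (4 : ℝ))
    hsubst measurableSet_Ioi, ?_⟩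
  rw [← integral_Ioi_comp_sq, ← setIntegral_congr_fun measurableSet_Ioi hsubst, integral_smul,
    integral_div_sq_smul_comp_mul_sub_div_of_even ha (by norm_num) hh (fun u => by simp),
    integral_cexp_neg_mul_sq_add hy]
  have hsqrt : y ^ (1 / 2 : ℂ) * (π / y) ^ (1 / 2 : ℂ) = (√π : ℂ) := by
    rw [cpow_mul_ofReal_div_cpow (mem_slitPlane_iff.2 (Or.inl hy)) pi_pos,
      Real.sqrt_eq_rpow, ofReal_cpow pi_pos.le]
    norm_num
  have hsqrt_ne : (√π : ℂ) ≠ 0 := ofReal_ne_zero.2 (Real.sqrt_pos.2 pi_pos).ne'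
  rw [smul_smul, real_smul, show ((4 * 2⁻¹ : ℝ) : ℂ) = 2 by norm_num, div_mul_eq_mul_div,
    eq_div_iff (mul_ne_zero two_ne_zero hsqrt_ne), ← hsqrt]
  ring
end

section
/- For each fixed y ∈ ℝ² and all t > 0, x ∈ ℝ², the Mehler kernel satisfies the magnetic heat equation ∂_t K(t,x,y) = Δ_x K(t,x,y) − iB₀(x₁ ∂_{x₂}K(t,x,y) − x₂ ∂_{x₁}K(t,x,y)) − (B₀²/4)|x|² K(t,x,y); equivalently, ∂_t K = −H_{B₀} K where H_{B₀} acts in the x-variable. -/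
open MeasureTheory Real Set

/-- The Mehler kernel `K(t,x,y)` of the Landau Hamiltonian with constant magnetic field `B₀`:
`K(t,x,y) = (B₀/(4π sinh(B₀t))) exp(−B₀|x−y|²/(4 tanh(B₀t)) − i(B₀/2)(x₁y₂ − x₂y₁))`. -/
noncomputable def mehlerK (B₀ t : ℝ) (x y : ℝ × ℝ) : ℂ :=
  ((B₀ / (4 * Real.pi * Real.sinh (B₀ * t)) : ℝ) : ℂ) *
    Complex.exp
      (-(((B₀ * ((x.1 - y.1) ^ 2 + (x.2 - y.2) ^ 2) / (4 * Real.tanh (B₀ * t))) : ℝ) : ℂ)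
        - Complex.I * ((B₀ / 2 : ℝ) : ℂ) * (((x.1 * y.2 - x.2 * y.1) : ℝ) : ℂ))

/-! The Mehler kernel is a Gaussian `c(t) exp(-κ(t)|x - y|² - i(B₀/2)(x₁y₂ - x₂y₁))`. Inserting
such an ansatz into the magnetic heat equation, the imaginary cross terms produced by the gauge
factor cancel against the magnetic drift term, and what remains is the ODE system
`c' = -4κc`, `κ' = B₀²/4 - 4κ²`. Its solution is `c = B₀/(4π sinh(B₀t))`,
`κ = (B₀/4) coth(B₀t)`: the Riccati equation for `κ` is just the quotient rule for
`cosh/sinh`, and `c'/c = -B₀ coth(B₀t)`. -/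

theorem hasDerivAt_deriv_const_mul_cexp {𝕜 : Type*} [NontriviallyNormedField 𝕜]
    [NormedAlgebra 𝕜 ℂ] {g g' : 𝕜 → ℂ} {g'' : ℂ} (C : ℂ) {s : 𝕜}
    (hg : ∀ r, HasDerivAt g (g' r) r) (hg' : HasDerivAt g' g'' s) :
    HasDerivAt (deriv fun r => C * Complex.exp (g r))
      (C * Complex.exp (g s) * (g' s ^ 2 + g'')) s := by
  have h_deriv : deriv (fun r => C * Complex.exp (g r)) = fun r => C * Complex.exp (g r) * g' r :=
    funext fun r => by rw [((hg r).cexp.const_mul C).deriv, mul_assoc]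
  rw [h_deriv]
  exact (((hg s).cexp.const_mul C).mul hg').congr_deriv (by ring)

noncomputable def magneticPhase (B₀ : ℝ) (κ : ℂ) (x y : ℝ × ℝ) : ℂ :=
  -κ * (((x.1 : ℂ) - y.1) ^ 2 + ((x.2 : ℂ) - y.2) ^ 2)
    - Complex.I * (B₀ / 2) * ((x.1 : ℂ) * y.2 - (x.2 : ℂ) * y.1)

noncomputable def magneticGaussian (B₀ : ℝ) (c κ : ℝ → ℂ) (t : ℝ) (x y : ℝ × ℝ) : ℂ :=
  c t * Complex.exp (magneticPhase B₀ (κ t) x y)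

theorem hasDerivAt_ofReal_affine (a b : ℂ) (s : ℝ) :
    HasDerivAt (fun r : ℝ => a * r + b) a s := by
  simpa using ((hasDerivAt_id s).ofReal_comp.const_mul a).add_const b

section magneticPhase

variable (B₀ : ℝ) (κ : ℂ) (y : ℝ × ℝ)

theorem hasDerivAt_magneticPhase_fst (b s : ℝ) :
    HasDerivAt (fun r : ℝ => magneticPhase B₀ κ (r, b) y)
      (-2 * κ * s + (2 * κ * y.1 - Complex.I * (B₀ / 2) * y.2)) s := by
  have hs := (hasDerivAt_id' s).ofReal_comp
  refine ((((hs.sub_const (y.1 : ℂ)).fun_pow 2).add_const (((b : ℂ) - y.2) ^ 2)).const_mul (-κ)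
    |>.fun_sub ((hs.mul_const (y.2 : ℂ)).sub_const ((b : ℂ) * y.1) |>.const_mul
      (Complex.I * (B₀ / 2)))).congr_deriv ?_
  push_cast
  ring

theorem hasDerivAt_magneticPhase_snd (a s : ℝ) :
    HasDerivAt (fun r : ℝ => magneticPhase B₀ κ (a, r) y)
      (-2 * κ * s + (2 * κ * y.2 + Complex.I * (B₀ / 2) * y.1)) s := by
  have hs := (hasDerivAt_id' s).ofReal_comp
  refine ((((hs.sub_const (y.2 : ℂ)).fun_pow 2).const_add (((a : ℂ) - y.1) ^ 2)).const_mul (-κ)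
    |>.fun_sub ((hs.mul_const (y.1 : ℂ)).const_sub ((a : ℂ) * y.2) |>.const_mul
      (Complex.I * (B₀ / 2)))).congr_deriv ?_
  push_cast
  ring

end magneticPhase

theorem HasDerivAt.magneticPhase {t : ℝ} {κ : ℝ → ℂ} {κ' : ℂ} (hκ : HasDerivAt κ κ' t)
    (B₀ : ℝ) (x y : ℝ × ℝ) :
    HasDerivAt (fun τ => magneticPhase B₀ (κ τ) x y)
      (-κ' * (((x.1 : ℂ) - y.1) ^ 2 + ((x.2 : ℂ) - y.2) ^ 2)) t :=
  (hκ.neg.mul_const _).sub_const _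

theorem magneticGaussian_heat_equation {B₀ t : ℝ} {c κ : ℝ → ℂ}
    (hc : HasDerivAt c (-4 * κ t * c t) t) (hκ : HasDerivAt κ (B₀ ^ 2 / 4 - 4 * κ t ^ 2) t)
    (x y : ℝ × ℝ) :
    deriv (fun τ : ℝ => magneticGaussian B₀ c κ τ x y) t =
      (deriv (fun a : ℝ => deriv (fun a' : ℝ => magneticGaussian B₀ c κ t (a', x.2) y) a) x.1 +
        deriv (fun b : ℝ => deriv (fun b' : ℝ => magneticGaussian B₀ c κ t (x.1, b') y) b) x.2)
      - Complex.I * (B₀ : ℂ) *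
          ((x.1 : ℂ) * deriv (fun b : ℝ => magneticGaussian B₀ c κ t (x.1, b) y) x.2 -
            (x.2 : ℂ) * deriv (fun a : ℝ => magneticGaussian B₀ c κ t (a, x.2) y) x.1)
      - ((B₀ ^ 2 / 4 : ℝ) : ℂ) * (((x.1 ^ 2 + x.2 ^ 2 : ℝ)) : ℂ) *
          magneticGaussian B₀ c κ t x y := by
  obtain ⟨x₁, x₂⟩ := x
  have h_t := hc.fun_mul (hκ.magneticPhase B₀ (x₁, x₂) y).cexp
  have h₁ := (hasDerivAt_magneticPhase_fst B₀ (κ t) y x₂ x₁).cexp.const_mul (c t)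
  have h₂ := (hasDerivAt_magneticPhase_snd B₀ (κ t) y x₁ x₂).cexp.const_mul (c t)
  have h₁₁ := hasDerivAt_deriv_const_mul_cexp (c t)
    (hasDerivAt_magneticPhase_fst B₀ (κ t) y x₂) (hasDerivAt_ofReal_affine _ _ x₁)
  have h₂₂ := hasDerivAt_deriv_const_mul_cexp (c t)
    (hasDerivAt_magneticPhase_snd B₀ (κ t) y x₁) (hasDerivAt_ofReal_affine _ _ x₂)
  simp only [magneticGaussian]
  rw [h_t.deriv, h₁₁.deriv, h₂₂.deriv, h₁.deriv, h₂.deriv]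
  push_cast
  linear_combination (c t * Complex.exp (magneticPhase B₀ (κ t) (x₁, x₂) y) * B₀ ^ 2 / 4 *
    (2 * (x₁ * y.1 + x₂ * y.2) - y.1 ^ 2 - y.2 ^ 2)) * Complex.I_sq

noncomputable def mehlerAmplitude (B₀ t : ℝ) : ℝ := B₀ / (4 * π * sinh (B₀ * t))

noncomputable def mehlerGaussCoeff (B₀ t : ℝ) : ℝ := B₀ / (4 * tanh (B₀ * t))

theorem mehlerGaussCoeff_eq (B₀ t : ℝ) :
    mehlerGaussCoeff B₀ t = B₀ * cosh (B₀ * t) / (4 * sinh (B₀ * t)) := by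
  rw [mehlerGaussCoeff, tanh_eq_sinh_div_cosh, ← mul_div_assoc, div_div_eq_mul_div]

theorem hasDerivAt_mehlerGaussCoeff {B₀ t : ℝ} (h : B₀ * t ≠ 0) :
    HasDerivAt (mehlerGaussCoeff B₀) (B₀ ^ 2 / 4 - 4 * mehlerGaussCoeff B₀ t ^ 2) t := by
  have hs : sinh (B₀ * t) ≠ 0 := sinh_ne_zero.mpr h
  rw [funext (mehlerGaussCoeff_eq B₀)]
  refine (((hasDerivAt_const_mul B₀).cosh.const_mul B₀).div
    ((hasDerivAt_const_mul B₀).sinh.const_mul 4) (by positivity)).congr_deriv ?_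
  field_simp

theorem hasDerivAt_mehlerAmplitude {B₀ t : ℝ} (h : B₀ * t ≠ 0) :
    HasDerivAt (mehlerAmplitude B₀) (-4 * mehlerGaussCoeff B₀ t * mehlerAmplitude B₀ t) t := by
  have hs : sinh (B₀ * t) ≠ 0 := sinh_ne_zero.mpr h
  refine ((hasDerivAt_const t B₀).div ((hasDerivAt_const_mul B₀).sinh.const_mul (4 * π))
    (by positivity)).congr_deriv ?_
  rw [mehlerAmplitude, mehlerGaussCoeff_eq]
  field_simp
  ring

theorem mehlerK_eq_magneticGaussian (B₀ t : ℝ) (x y : ℝ × ℝ) :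
    mehlerK B₀ t x y = magneticGaussian B₀ (fun τ => (mehlerAmplitude B₀ τ : ℂ))
      (fun τ => (mehlerGaussCoeff B₀ τ : ℂ)) t x y := by
  rw [mehlerK, magneticGaussian, magneticPhase, mehlerAmplitude, mehlerGaussCoeff]
  congr 2
  push_cast
  ring

/-- **The Mehler kernel solves the magnetic heat equation.** For fixed `y ∈ ℝ²` and all `t > 0`,
`x ∈ ℝ²`, one has
`∂_t K = Δ_x K − iB₀(x₁ ∂₂K − x₂ ∂₁K) − (B₀²/4)|x|² K`, i.e. `∂_t K = −H_{B₀} K` in `x`. -/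
theorem mehlerK_heat_equation (B₀ : ℝ) (hB : 0 < B₀) (y : ℝ × ℝ) (t : ℝ) (ht : 0 < t)
    (x : ℝ × ℝ) :
    deriv (fun τ : ℝ => mehlerK B₀ τ x y) t =
      (deriv (fun a : ℝ => deriv (fun a' : ℝ => mehlerK B₀ t (a', x.2) y) a) x.1 +
        deriv (fun b : ℝ => deriv (fun b' : ℝ => mehlerK B₀ t (x.1, b') y) b) x.2)
      - Complex.I * (B₀ : ℂ) *
          ((x.1 : ℂ) * deriv (fun b : ℝ => mehlerK B₀ t (x.1, b) y) x.2 -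
            (x.2 : ℂ) * deriv (fun a : ℝ => mehlerK B₀ t (a, x.2) y) x.1)
      - ((B₀ ^ 2 / 4 : ℝ) : ℂ) * (((x.1 ^ 2 + x.2 ^ 2 : ℝ)) : ℂ) * mehlerK B₀ t x y := by
  have h : B₀ * t ≠ 0 := (mul_pos hB ht).ne'
  simp only [mehlerK_eq_magneticGaussian]
  refine magneticGaussian_heat_equation ?_ ?_ x y
  · exact_mod_cast (hasDerivAt_mehlerAmplitude h).ofReal_comp
  · exact_mod_cast (hasDerivAt_mehlerGaussCoeff h).ofReal_comp
end

section
/- For all t > 0 and all x, y ∈ ℝ², the Mehler kernel obeys the Gaussian upper bound |K(t,x,y)| ≤ (1/(4πt)) e^{−|x−y|²/(4t)}. -/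
open MeasureTheory Real Set

/-! Both factors of `K` are dominated by their `B₀ → 0` limits, the free heat kernel: the prefactor
because `a ≤ sinh a`, and the Gaussian because `tanh a ≤ a` (for `a = B₀ t ≥ 0`). The magnetic
phase has modulus one. -/

/-- `a cosh a - sinh a` vanishes at `0` and has derivative `a sinh a ≥ 0` on `[0, ∞)`. -/
theorem sinh_le_mul_cosh {a : ℝ} (ha : 0 ≤ a) : sinh a ≤ a * cosh a := by
  let f : ℝ → ℝ := fun x => x * cosh x - sinh x
  have hf' : ∀ x, HasDerivAt f (x * sinh x) x := fun x =>
    (((hasDerivAt_id' x).mul (hasDerivAt_cosh x)).sub (hasDerivAt_sinh x)).congr_deriv (by ring)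
  have hmono : MonotoneOn f (Ici 0) := by
    refine monotoneOn_of_hasDerivWithinAt_nonneg (convex_Ici 0)
      (fun x _ => (hf' x).continuousAt.continuousWithinAt)
      (fun x _ => (hf' x).hasDerivWithinAt) fun x hx => ?_
    rw [interior_Ici] at hx
    exact mul_nonneg hx.le (sinh_nonneg_iff.mpr hx.le)
  simpa [f] using hmono self_mem_Ici ha ha

theorem tanh_le_self {a : ℝ} (ha : 0 ≤ a) : tanh a ≤ a := by
  rw [tanh_eq_sinh_div_cosh, div_le_iff₀ (cosh_pos a)]
  exact sinh_le_mul_cosh ha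

theorem tanh_pos_of_pos {a : ℝ} (ha : 0 < a) : 0 < tanh a := by
  rw [tanh_eq_sinh_div_cosh]
  exact div_pos (sinh_pos_iff.mpr ha) (cosh_pos a)

theorem norm_mehlerK (B₀ t : ℝ) (x y : ℝ × ℝ) :
    ‖mehlerK B₀ t x y‖ = |B₀ / (4 * π * sinh (B₀ * t))| *
      exp (-(B₀ * ((x.1 - y.1) ^ 2 + (x.2 - y.2) ^ 2) / (4 * tanh (B₀ * t)))) := by
  rw [mehlerK, norm_mul, Complex.norm_real, Real.norm_eq_abs, Complex.norm_exp]
  simp only [Complex.sub_re, Complex.neg_re, Complex.ofReal_re, Complex.mul_re, Complex.I_re,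
    Complex.I_im, Complex.ofReal_im, mul_zero, zero_mul, sub_zero]

theorem abs_mehlerK_prefactor_le {B₀ t : ℝ} (hB : 0 < B₀) (ht : 0 < t) :
    |B₀ / (4 * π * sinh (B₀ * t))| ≤ 1 / (4 * π * t) := by
  have hBt : 0 < B₀ * t := mul_pos hB ht
  have hsinh : B₀ * t ≤ sinh (B₀ * t) := self_le_sinh_iff.mpr hBt.le
  rw [abs_of_pos (div_pos hB (by positivity)), div_le_div_iff₀ (by positivity) (by positivity)]
  nlinarith [pi_pos]

theorem mehlerK_exponent_le {B₀ t r : ℝ} (hB : 0 < B₀) (ht : 0 < t) (hr : 0 ≤ r) :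
    -(B₀ * r / (4 * tanh (B₀ * t))) ≤ -r / (4 * t) := by
  have htanh : 0 < tanh (B₀ * t) := tanh_pos_of_pos (mul_pos hB ht)
  have htanh_le : tanh (B₀ * t) ≤ B₀ * t := tanh_le_self (mul_pos hB ht).le
  rw [neg_div, neg_le_neg_iff, div_le_div_iff₀ (by positivity) (by positivity)]
  nlinarith

/-- **Gaussian upper bound for the Mehler kernel.** For `B₀ > 0`, all `t > 0` and `x, y ∈ ℝ²`,
`|K(t,x,y)| ≤ (1/(4πt)) e^{−|x−y|²/(4t)}`. -/
theorem mehlerK_gaussian_bound (B₀ : ℝ) (hB : 0 < B₀) (t : ℝ) (ht : 0 < t) (x y : ℝ × ℝ) :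
    ‖mehlerK B₀ t x y‖ ≤
      1 / (4 * Real.pi * t) *
        Real.exp (-(((x.1 - y.1) ^ 2 + (x.2 - y.2) ^ 2)) / (4 * t)) := by
  rw [norm_mehlerK]
  gcongr ?_ * exp ?_
  · exact abs_mehlerK_prefactor_le hB ht
  · exact mehlerK_exponent_le hB ht (by positivity)
end

section
/- Let k ∈ ℤ, m ≥ 0, B₀ > 0 and σ ∈ {+1, −1}. Suppose φ, ψ ∈ C¹((0,∞);ℂ) are square-integrable with respect to the measure r dr on (0,∞) and satisfy the system i(ψ′(r) + ((k+1)/r)ψ(r) − (B₀/2)rψ(r)) = (σi − m)φ(r) and i(φ′(r) − (k/r)φ(r) + (B₀/2)rφ(r)) = (σi + m)ψ(r) for all r > 0. Then φ ≡ 0 and ψ ≡ 0. (Equivalently, the deficiency spaces N_± = ker(d_k^* ∓ i) of the radial Dirac operator d_k are trivial, so d_k is essentially self-adjoint.) -/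
/-!
Write `G = r (‖φ‖² + ‖ψ‖²)`, integrable on `(0, ∞)`. The system makes `P = σ r ⟪φ, ψ⟫` and
`H = r (‖φ‖² - ‖ψ‖²)` satisfy `P' = G` and `H' = (ν - e r²) / r · G` with `ν = 2k + 1`, `e = B₀`,
and `|P|, |H| ≤ G`. An increasing `P` dominated by an integrable `G` cannot be positive anywhere.
If `P(r₀) < 0`, then `G ≥ -P(r₀) > 0` on `(0, r₀]`. Negating `H`, `ν`, `e` if needed, `ν ≥ 1`, so
`H' ≥ c / (2r)` near `0` and `H → -∞` there; as `H' ≥ -(ν - e r²) / r · H`, the product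
`r^ν exp (-e r² / 2) · H` increases, which forces `G ≥ -H ≳ 1 / r` near `0`, against
integrability. So `P ≡ 0`, and `G = P' ≡ 0`.
-/

open MeasureTheory Real Set

open Filter Topology ComplexConjugate

theorem monotoneOn_of_hasDerivAt_nonneg {D : Set ℝ} (hD : Convex ℝ D) {f f' : ℝ → ℝ}
    (hf : ∀ x ∈ D, HasDerivAt f (f' x) x) (hf' : ∀ x ∈ D, 0 ≤ f' x) : MonotoneOn f D :=
  monotoneOn_of_hasDerivWithinAt_nonneg hD
    (fun x hx => (hf x hx).continuousAt.continuousWithinAt)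
    (fun x hx => (hf x (interior_subset hx)).hasDerivWithinAt)
    (fun x hx => hf' x (interior_subset hx))

theorem nonpos_of_monotoneOn_of_le_of_integrableOn {P G : ℝ → ℝ} {a r : ℝ}
    (hP : MonotoneOn P (Ioi a)) (hPG : ∀ x ∈ Ioi a, P x ≤ G x) (hG : IntegrableOn G (Ioi a))
    (hr : r ∈ Ioi a) : P r ≤ 0 := by
  by_contra! hpos
  have hconst : IntegrableOn (fun _ => P r) (Ioi r) := by
    refine (hG.mono_set (Ioi_subset_Ioi (le_of_lt hr))).mono' aestronglyMeasurable_const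
      ((ae_restrict_iff' measurableSet_Ioi).2 (ae_of_all _ fun x hx => ?_))
    have hxa : x ∈ Ioi a := (mem_Ioi.1 hr).trans hx
    rw [norm_of_nonneg hpos.le]
    exact (hP hr hxa hx.le).trans (hPG x hxa)
  simp [hpos.ne'] at hconst

theorem tendsto_nhdsGT_atBot_of_div_le_deriv {H H' : ℝ → ℝ} {b c : ℝ} (hb : 0 < b) (hc : 0 < c)
    (hH : ∀ r ∈ Ioc 0 b, HasDerivAt H (H' r) r) (hH' : ∀ r ∈ Ioc 0 b, c / r ≤ H' r) :
    Tendsto H (𝓝[>] 0) atBot := by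
  have hmono : MonotoneOn (fun r => H r - c * log r) (Ioc 0 b) :=
    monotoneOn_of_hasDerivAt_nonneg (convex_Ioc 0 b)
      (fun r hr => (hH r hr).sub ((hasDerivAt_log hr.1.ne').const_mul c))
      (fun r hr => by simpa [div_eq_mul_inv] using hH' r hr)
  refine tendsto_atBot_mono' _ ?_ (tendsto_atBot_add_const_right _ (H b - c * log b)
    (tendsto_log_nhdsGT_zero.const_mul_atBot hc))
  filter_upwards [Ioc_mem_nhdsGT hb] with r hr
  linarith [hmono hr (right_mem_Ioc.2 hb) hr.2]

theorem not_integrableOn_Ioc_zero_of_div_le {G : ℝ → ℝ} {b c : ℝ} (hb : 0 < b) (hc : 0 < c)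
    (hG : ∀ r ∈ Ioc 0 b, c / r ≤ G r) : ¬ IntegrableOn G (Ioc 0 b) := by
  intro hint
  have hdiv : IntegrableOn (fun r => c / r) (Ioc 0 b) :=
    hint.mono' (measurable_const.div measurable_id).aestronglyMeasurable
      ((ae_restrict_iff' measurableSet_Ioc).2 (ae_of_all _ fun r hr => by
        rw [norm_of_nonneg (div_pos hc hr.1).le]; exact hG r hr))
  have hinv : IntervalIntegrable (fun r => r⁻¹) volume 0 b := by
    rw [intervalIntegrable_iff_integrableOn_Ioc_of_le hb.le]
    exact IntegrableOn.congr_fun (hdiv.const_mul c⁻¹) (fun r _ => by field_simp) measurableSet_Ioc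
  simp [hb.ne] at hinv

theorem hasDerivAt_rpow_mul_exp {ν e t : ℝ} (ht : 0 < t) :
    HasDerivAt (fun r => r ^ ν * exp (-e / 2 * r ^ 2))
      ((ν - e * t ^ 2) / t * (t ^ ν * exp (-e / 2 * t ^ 2))) t := by
  refine ((hasDerivAt_rpow_const (p := ν) (Or.inl ht.ne')).mul
    (((hasDerivAt_pow 2 t).const_mul (-e / 2)).exp)).congr_deriv ?_
  rw [rpow_sub ht, rpow_one]
  field_simp
  ring

theorem rpow_mul_exp_le {ν e r : ℝ} (hν : 1 ≤ ν) (hr : 0 < r) (hr1 : r ≤ 1) :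
    r ^ ν * exp (-e / 2 * r ^ 2) ≤ exp (|e| / 2) * r := by
  have hpow : r ^ ν ≤ r := by simpa using rpow_le_rpow_of_exponent_ge hr hr1 hν
  have hexp : exp (-e / 2 * r ^ 2) ≤ exp (|e| / 2) := by
    rw [exp_le_exp]
    nlinarith [neg_le_abs e, abs_nonneg e, sq_nonneg r, pow_le_one₀ hr.le hr1 (n := 2)]
  nlinarith [rpow_pos_of_pos hr ν, exp_pos (-e / 2 * r ^ 2)]

theorem not_integrableOn_Ioc_zero_of_hasDerivAt_of_neg {G H : ℝ → ℝ} {ν e b : ℝ} (hν : 1 ≤ ν)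
    (hb : 0 < b) (hb1 : b ≤ 1) (hνe : ∀ r ∈ Ioc 0 b, 0 ≤ ν - e * r ^ 2)
    (hHG : ∀ r ∈ Ioc 0 b, -G r ≤ H r)
    (hH : ∀ r ∈ Ioc 0 b, HasDerivAt H ((ν - e * r ^ 2) / r * G r) r) (hHb : H b < 0) :
    ¬ IntegrableOn G (Ioc 0 b) := by
  set μ : ℝ → ℝ := fun r => r ^ ν * exp (-e / 2 * r ^ 2)
  have hμ : ∀ r ∈ Ioc 0 b, 0 < μ r := fun r hr => mul_pos (rpow_pos_of_pos hr.1 ν) (exp_pos _)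
  have hmono : MonotoneOn (fun r => μ r * H r) (Ioc 0 b) :=
    monotoneOn_of_hasDerivAt_nonneg (convex_Ioc 0 b)
      (fun r hr => (hasDerivAt_rpow_mul_exp hr.1).mul (hH r hr)) fun r hr => by
        have : 0 ≤ (ν - e * r ^ 2) / r * μ r * (H r + G r) :=
          mul_nonneg (mul_nonneg (div_nonneg (hνe r hr) hr.1.le) (hμ r hr).le)
            (by linarith [hHG r hr])
        linarith
  set K := exp (|e| / 2)
  refine not_integrableOn_Ioc_zero_of_div_le hb (c := -(μ b * H b) / K)
    (div_pos (by nlinarith [hμ b (right_mem_Ioc.2 hb)]) (exp_pos _)) fun r hr => ?_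
  have hμr : μ r ≤ K * r := rpow_mul_exp_le hν hr.1 (hr.2.trans hb1)
  have hRr : μ r * H r ≤ μ b * H b := hmono hr (right_mem_Ioc.2 hb) hr.2
  calc -(μ b * H b) / K / r = -(μ b * H b) / (K * r) := by rw [div_div]
    _ ≤ -(μ b * H b) / μ r :=
        div_le_div_of_nonneg_left (by nlinarith [hμ b (right_mem_Ioc.2 hb)]) (hμ r hr) hμr
    _ ≤ -H r := by rw [div_le_iff₀ (hμ r hr)]; linarith
    _ ≤ G r := by linarith [hHG r hr]

theorem exists_lt_of_abs_le_of_hasDerivAt {G H : ℝ → ℝ} {ν e c r₀ : ℝ} (hν : 1 ≤ |ν|)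
    (hc : 0 < c) (hr₀ : 0 < r₀) (hHG : ∀ r ∈ Ioc 0 r₀, |H r| ≤ G r)
    (hH : ∀ r ∈ Ioc 0 r₀, HasDerivAt H ((ν - e * r ^ 2) / r * G r) r)
    (hG : IntegrableOn G (Ioc 0 r₀)) : ∃ r ∈ Ioc 0 r₀, G r < c := by
  wlog hν₁ : 1 ≤ ν generalizing H ν e
  · refine this (H := -H) (ν := -ν) (e := -e) (by rwa [abs_neg]) (by simpa using hHG)
      (fun r hr => (hH r hr).neg.congr_deriv (by ring))
      (by rcases le_abs'.1 hν with h | h <;> linarith)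
  by_contra! hcG
  obtain ⟨b, hb, hbsub⟩ : ∃ b ∈ Ioi 0, Ioc 0 b ⊆ {r | r ≤ r₀ ∧ r ≤ 1 ∧ 1 / 2 ≤ ν - e * r ^ 2} := by
    refine mem_nhdsGT_iff_exists_Ioc_subset.1 (nhdsWithin_le_nhds ?_)
    refine (eventually_le_nhds hr₀).and ((eventually_le_nhds one_pos).and ?_)
    refine Tendsto.eventually_const_le (show (1 : ℝ) / 2 < ν by linarith) ?_
    exact (by fun_prop : Continuous fun r : ℝ => ν - e * r ^ 2).tendsto' 0 ν (by simp)
  have hsub : Ioc 0 b ⊆ Ioc 0 r₀ := fun r hr => ⟨hr.1, (hbsub hr).1⟩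
  have hbot : Tendsto H (𝓝[>] 0) atBot :=
    tendsto_nhdsGT_atBot_of_div_le_deriv hb (half_pos hc) (fun r hr => hH r (hsub hr))
      fun r hr => by
        have := (hbsub hr).2.2
        rw [div_mul_eq_mul_div, div_le_div_iff_of_pos_right hr.1]
        nlinarith [hcG r (hsub hr)]
  obtain ⟨r, hHr, hr⟩ := ((hbot.eventually (eventually_lt_atBot 0)).and (Ioc_mem_nhdsGT hb)).exists
  have hrsub : Ioc 0 r ⊆ Ioc 0 b := Ioc_subset_Ioc_right hr.2
  exact not_integrableOn_Ioc_zero_of_hasDerivAt_of_neg hν₁ hr.1 (hbsub hr).2.1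
    (fun x hx => by linarith [(hbsub (hrsub hx)).2.2])
    (fun x hx => by linarith [neg_abs_le (H x), hHG x (hsub (hrsub hx))])
    (fun x hx => hH x (hsub (hrsub hx))) hHr (hG.mono_set (hrsub.trans hsub))

theorem eqOn_zero_of_hasDerivAt_of_abs_le {G P H : ℝ → ℝ} {ν e : ℝ} (hν : 1 ≤ |ν|)
    (hG : IntegrableOn G (Ioi 0)) (hPG : ∀ r ∈ Ioi 0, |P r| ≤ G r)
    (hHG : ∀ r ∈ Ioi 0, |H r| ≤ G r) (hP : ∀ r ∈ Ioi 0, HasDerivAt P (G r) r)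
    (hH : ∀ r ∈ Ioi 0, HasDerivAt H ((ν - e * r ^ 2) / r * G r) r) : EqOn G 0 (Ioi 0) := by
  have hPmono : MonotoneOn P (Ioi 0) := monotoneOn_of_hasDerivAt_nonneg (convex_Ioi 0) hP
    fun r hr => (abs_nonneg _).trans (hPG r hr)
  have hPle : ∀ r ∈ Ioi 0, P r ≤ 0 := fun r hr =>
    nonpos_of_monotoneOn_of_le_of_integrableOn hPmono
      (fun x hx => (le_abs_self _).trans (hPG x hx)) hG hr
  have hPge : ∀ r ∈ Ioi 0, 0 ≤ P r := by
    intro r₀ hr₀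
    by_contra! hneg
    obtain ⟨r, hr, hGr⟩ := exists_lt_of_abs_le_of_hasDerivAt hν (neg_pos.2 hneg) hr₀
      (fun r hr => hHG r hr.1) (fun r hr => hH r hr.1) (hG.mono_set Ioc_subset_Ioi_self)
    linarith [hPmono hr.1 hr₀ hr.2, neg_abs_le (P r), hPG r hr.1]
  intro r hr
  have hP0 : P =ᶠ[𝓝 r] fun _ => 0 := by
    filter_upwards [Ioi_mem_nhds hr] with x hx using le_antisymm (hPle x hx) (hPge x hx)
  exact (hP r hr).unique ((hasDerivAt_const r 0).congr_of_eventuallyEq hP0)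

section CoupledPair

variable {φ ψ : ℝ → ℂ} {α β r : ℝ} {z : ℂ}

theorem hasDerivAt_sq_norm_sub_sq_norm_of_coupled (hφ : HasDerivAt φ (α * φ r + z * ψ r) r)
    (hψ : HasDerivAt ψ (β * ψ r + conj z * φ r) r) :
    HasDerivAt (fun t => ‖φ t‖ ^ 2 - ‖ψ t‖ ^ 2) (2 * (α * ‖φ r‖ ^ 2 - β * ‖ψ r‖ ^ 2)) r := by
  refine (hφ.norm_sq.sub hψ.norm_sq).congr_deriv ?_
  simp only [Complex.inner, Complex.sq_norm, Complex.normSq_apply, Complex.mul_re,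
    Complex.mul_im, Complex.add_re, Complex.add_im, Complex.conj_re, Complex.conj_im,
    Complex.ofReal_re, Complex.ofReal_im]
  ring

theorem hasDerivAt_inner_of_coupled (hφ : HasDerivAt φ (α * φ r + z * ψ r) r)
    (hψ : HasDerivAt ψ (β * ψ r + conj z * φ r) r) :
    HasDerivAt (fun t => inner ℝ (φ t) (ψ t))
      ((α + β) * inner ℝ (φ r) (ψ r) + z.re * (‖φ r‖ ^ 2 + ‖ψ r‖ ^ 2)) r := by
  refine (hφ.inner ℝ hψ).congr_deriv ?_
  simp only [Complex.inner, Complex.sq_norm, Complex.normSq_apply, Complex.mul_re,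
    Complex.mul_im, Complex.add_re, Complex.add_im, Complex.conj_re, Complex.conj_im,
    Complex.ofReal_re, Complex.ofReal_im]
  ring

end CoupledPair

section RadialSystem

variable {φ ψ : ℝ → ℂ} {k B₀ r : ℝ} {z : ℂ}

theorem hasDerivAt_mul_inner_of_radial (hz : z.re ^ 2 = 1) (hr : 0 < r)
    (hφ : HasDerivAt φ (((k / r - B₀ / 2 * r : ℝ) : ℂ) * φ r + z * ψ r) r)
    (hψ : HasDerivAt ψ (((B₀ / 2 * r - (k + 1) / r : ℝ) : ℂ) * ψ r + conj z * φ r) r) :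
    HasDerivAt (fun t => z.re * t * inner ℝ (φ t) (ψ t)) (‖φ r‖ ^ 2 * r + ‖ψ r‖ ^ 2 * r) r := by
  refine (((hasDerivAt_id' r).const_mul z.re).mul
    (hasDerivAt_inner_of_coupled hφ hψ)).congr_deriv ?_
  field_simp
  linear_combination 2 * r * (‖φ r‖ ^ 2 + ‖ψ r‖ ^ 2) * hz

theorem hasDerivAt_mul_sq_norm_sub_of_radial (hr : 0 < r)
    (hφ : HasDerivAt φ (((k / r - B₀ / 2 * r : ℝ) : ℂ) * φ r + z * ψ r) r)
    (hψ : HasDerivAt ψ (((B₀ / 2 * r - (k + 1) / r : ℝ) : ℂ) * ψ r + conj z * φ r) r) :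
    HasDerivAt (fun t => t * (‖φ t‖ ^ 2 - ‖ψ t‖ ^ 2))
      ((2 * k + 1 - B₀ * r ^ 2) / r * (‖φ r‖ ^ 2 * r + ‖ψ r‖ ^ 2 * r)) r := by
  refine ((hasDerivAt_id' r).mul
    (hasDerivAt_sq_norm_sub_sq_norm_of_coupled hφ hψ)).congr_deriv ?_
  field_simp
  ring

end RadialSystem

theorem abs_mul_mul_inner_le {E : Type*} [NormedAddCommGroup E] [InnerProductSpace ℝ E]
    {s r : ℝ} (hs : s ^ 2 = 1) (hr : 0 ≤ r) (x y : E) :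
    |s * r * inner ℝ x y| ≤ ‖x‖ ^ 2 * r + ‖y‖ ^ 2 * r := by
  have hs : |s| = 1 := (pow_eq_one_iff_of_nonneg (abs_nonneg s) two_ne_zero).1 (by rwa [sq_abs])
  rw [abs_mul, abs_mul, hs, abs_of_nonneg hr]
  nlinarith [abs_real_inner_le_norm x y, sq_nonneg (‖x‖ - ‖y‖)]

theorem abs_mul_sq_sub_sq_le {r : ℝ} (hr : 0 ≤ r) (a b : ℝ) :
    |r * (a ^ 2 - b ^ 2)| ≤ a ^ 2 * r + b ^ 2 * r :=
  abs_le.2 ⟨by nlinarith [mul_nonneg hr (sq_nonneg a)], by nlinarith [mul_nonneg hr (sq_nonneg b)]⟩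

theorem radial_dirac_deficiency_trivial_general (k : ℤ) (m B₀ σ : ℝ)
    (hσ : σ = 1 ∨ σ = -1)
    (φ ψ : ℝ → ℂ) (hφ : ContDiffOn ℝ 1 φ (Set.Ioi 0)) (hψ : ContDiffOn ℝ 1 ψ (Set.Ioi 0))
    (hφL2 : IntegrableOn (fun r : ℝ => ‖φ r‖ ^ 2 * r) (Set.Ioi 0) volume)
    (hψL2 : IntegrableOn (fun r : ℝ => ‖ψ r‖ ^ 2 * r) (Set.Ioi 0) volume)
    (h1 : ∀ r : ℝ, 0 < r →
      Complex.I * (deriv ψ r + (((k : ℂ) + 1) / (r : ℂ)) * ψ r -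
          ((B₀ / 2 : ℝ) : ℂ) * (r : ℂ) * ψ r) = ((σ : ℂ) * Complex.I - (m : ℂ)) * φ r)
    (h2 : ∀ r : ℝ, 0 < r →
      Complex.I * (deriv φ r - ((k : ℂ) / (r : ℂ)) * φ r +
          ((B₀ / 2 : ℝ) : ℂ) * (r : ℂ) * φ r) = ((σ : ℂ) * Complex.I + (m : ℂ)) * ψ r) :
    ∀ r : ℝ, 0 < r → φ r = 0 ∧ ψ r = 0 := by
  set z : ℂ := σ - m * Complex.I
  have hz : z.re ^ 2 = 1 := by rcases hσ with rfl | rfl <;> simp [z]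
  have hφ' : ∀ r ∈ Ioi (0 : ℝ),
      HasDerivAt φ (((k / r - B₀ / 2 * r : ℝ) : ℂ) * φ r + z * ψ r) r := fun r hr => by
    refine ((hφ.differentiableOn one_ne_zero).differentiableAt (Ioi_mem_nhds hr)).hasDerivAt
      |>.congr_deriv ?_
    have h := h2 r hr
    push_cast at h ⊢
    linear_combination (-Complex.I) * h + (deriv φ r - k / r * φ r + B₀ / 2 * r * φ r
      - σ * ψ r) * Complex.I_mul_I
  have hψ' : ∀ r ∈ Ioi (0 : ℝ),
      HasDerivAt ψ (((B₀ / 2 * r - (k + 1) / r : ℝ) : ℂ) * ψ r + conj z * φ r) r := fun r hr => by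
    refine ((hψ.differentiableOn one_ne_zero).differentiableAt (Ioi_mem_nhds hr)).hasDerivAt
      |>.congr_deriv ?_
    simp only [z, map_sub, map_mul, Complex.conj_ofReal, Complex.conj_I]
    have h := h1 r hr
    push_cast at h ⊢
    linear_combination (-Complex.I) * h + (deriv ψ r + (k + 1) / r * ψ r
      - B₀ / 2 * r * ψ r - σ * φ r) * Complex.I_mul_I
  have hk : (1 : ℝ) ≤ |2 * (k : ℝ) + 1| := by
    exact_mod_cast Int.one_le_abs (by omega : 2 * k + 1 ≠ 0)
  have hG := eqOn_zero_of_hasDerivAt_of_abs_le hk (hφL2.add hψL2)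
    (fun r hr => abs_mul_mul_inner_le hz (le_of_lt hr) (φ r) (ψ r))
    (fun r hr => abs_mul_sq_sub_sq_le (le_of_lt hr) ‖φ r‖ ‖ψ r‖)
    (fun r hr => hasDerivAt_mul_inner_of_radial hz hr (hφ' r hr) (hψ' r hr))
    (fun r hr => hasDerivAt_mul_sq_norm_sub_of_radial hr (hφ' r hr) (hψ' r hr))
  intro r hr
  have hsum : (‖φ r‖ ^ 2 + ‖ψ r‖ ^ 2) * r = 0 := by simpa [add_mul] using hG hr
  simpa [hr.ne', add_eq_zero_iff_of_nonneg] using hsum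

/-- **Triviality of the deficiency spaces of the radial Dirac operator** (essential
self-adjointness).  Let `k ∈ ℤ`, `m ≥ 0`, `B₀ > 0` and `σ ∈ {+1,−1}`.  If `φ, ψ ∈ C¹((0,∞);ℂ)`
are square-integrable for the measure `r dr` on `(0,∞)` and satisfy
`i(ψ′ + ((k+1)/r)ψ − (B₀/2)rψ) = (σi − m)φ` and `i(φ′ − (k/r)φ + (B₀/2)rφ) = (σi + m)ψ`
for all `r > 0`, then `φ ≡ 0` and `ψ ≡ 0` on `(0,∞)`. -/
theorem radial_dirac_deficiency_trivial (k : ℤ) (m B₀ σ : ℝ) (hm : 0 ≤ m) (hB : 0 < B₀)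
    (hσ : σ = 1 ∨ σ = -1)
    (φ ψ : ℝ → ℂ) (hφ : ContDiffOn ℝ 1 φ (Set.Ioi 0)) (hψ : ContDiffOn ℝ 1 ψ (Set.Ioi 0))
    (hφL2 : IntegrableOn (fun r : ℝ => ‖φ r‖ ^ 2 * r) (Set.Ioi 0) volume)
    (hψL2 : IntegrableOn (fun r : ℝ => ‖ψ r‖ ^ 2 * r) (Set.Ioi 0) volume)
    (h1 : ∀ r : ℝ, 0 < r →
      Complex.I * (deriv ψ r + (((k : ℂ) + 1) / (r : ℂ)) * ψ r -
          ((B₀ / 2 : ℝ) : ℂ) * (r : ℂ) * ψ r) = ((σ : ℂ) * Complex.I - (m : ℂ)) * φ r)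
    (h2 : ∀ r : ℝ, 0 < r →
      Complex.I * (deriv φ r - ((k : ℂ) / (r : ℂ)) * φ r +
          ((B₀ / 2 : ℝ) : ℂ) * (r : ℂ) * φ r) = ((σ : ℂ) * Complex.I + (m : ℂ)) * ψ r) :
    ∀ r : ℝ, 0 < r → φ r = 0 ∧ ψ r = 0 :=
  radial_dirac_deficiency_trivial_general k m B₀ σ hσ φ ψ hφ hψ hφL2 hψL2 h1 h2
end
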